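/- Let T• = {Tⁱ} be a δ-functor between abelian categories 𝒜 and ℬ such that for each i > 0 the functor Tⁱ is effaceable (every object A of 𝒜 admits a monomorphism u : A → M with Tⁱ(u) = 0). Then T• is a universal δ-functor: for any δ-functor U• and natural transformation θ : T⁰ ⇒ U⁰ there exists a unique morphism of δ-functors θ• : T• → U• extending θ. -/
import Mathlib


open CategoryTheory CategoryTheory.Limits

universe u₁ v₁ u₂ v₂

variable (𝒜 : Type u₁) [Category.{v₁} 𝒜] [Abelian 𝒜]
variable (ℬ : Type u₂) [Category.{v₂} ℬ] [Abelian ℬ]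

/-- A (cohomological) δ-functor `{Tⁱ}` from `𝒜` to `ℬ`: a family of additive functors
together with connecting morphisms `δⁱ : Tⁱ(A₃) ⟶ T^{i+1}(A₁)` for every short exact
sequence `0 → A₁ → A₂ → A₃ → 0`, producing long exact sequences and natural with respect
to morphisms of short exact sequences. -/
structure DeltaFunctor where
  /-- the component functors -/
  F : ℕ → 𝒜 ⥤ ℬ
  additive : ∀ i, (F i).Additive
  /-- connecting morphisms -/
  δ : ∀ (i : ℕ) (S : ShortComplex 𝒜), S.ShortExact → ((F i).obj S.X₃ ⟶ (F (i + 1)).obj S.X₁)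
  mono0 : ∀ (S : ShortComplex 𝒜), S.ShortExact → Mono ((F 0).map S.f)
  comp_zero₁ : ∀ (i : ℕ) (S : ShortComplex 𝒜) (_ : S.ShortExact),
    (F i).map S.f ≫ (F i).map S.g = 0
  comp_zero₂ : ∀ (i : ℕ) (S : ShortComplex 𝒜) (hS : S.ShortExact),
    (F i).map S.g ≫ δ i S hS = 0
  comp_zero₃ : ∀ (i : ℕ) (S : ShortComplex 𝒜) (hS : S.ShortExact),
    δ i S hS ≫ (F (i + 1)).map S.f = 0
  exact₁ : ∀ (i : ℕ) (S : ShortComplex 𝒜) (hS : S.ShortExact),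
    (ShortComplex.mk ((F i).map S.f) ((F i).map S.g) (comp_zero₁ i S hS)).Exact
  exact₂ : ∀ (i : ℕ) (S : ShortComplex 𝒜) (hS : S.ShortExact),
    (ShortComplex.mk ((F i).map S.g) (δ i S hS) (comp_zero₂ i S hS)).Exact
  exact₃ : ∀ (i : ℕ) (S : ShortComplex 𝒜) (hS : S.ShortExact),
    (ShortComplex.mk (δ i S hS) ((F (i + 1)).map S.f) (comp_zero₃ i S hS)).Exact
  naturality : ∀ (i : ℕ) (S T : ShortComplex 𝒜) (hS : S.ShortExact) (hT : T.ShortExact)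
    (φ : S ⟶ T), (F i).map φ.τ₃ ≫ δ i T hT = δ i S hS ≫ (F (i + 1)).map φ.τ₁

variable {𝒜 ℬ}

/-- A family of natural transformations `ηⁱ : Tⁱ ⟶ Uⁱ` is a morphism of δ-functors when it
commutes with the connecting morphisms. -/
def DeltaFunctor.IsDeltaCompat (T U : DeltaFunctor 𝒜 ℬ) (η : ∀ i, T.F i ⟶ U.F i) : Prop :=
  ∀ (i : ℕ) (S : ShortComplex 𝒜) (hS : S.ShortExact),
    (η i).app S.X₃ ≫ U.δ i S hS = T.δ i S hS ≫ (η (i + 1)).app S.X₁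

/-- `T•` is universal: every natural transformation `θ : T⁰ ⟶ U⁰` to the degree-0 part of
another δ-functor extends uniquely to a morphism of δ-functors. -/
def DeltaFunctor.IsUniversal (T : DeltaFunctor 𝒜 ℬ) : Prop :=
  ∀ (U : DeltaFunctor 𝒜 ℬ) (θ : T.F 0 ⟶ U.F 0),
    ∃! η : ∀ i, T.F i ⟶ U.F i, η 0 = θ ∧ T.IsDeltaCompat U η

/-- `Tⁱ` is effaceable: every object admits a monomorphism `u` with `Tⁱ(u) = 0`. -/
def DeltaFunctor.Effaceable (T : DeltaFunctor 𝒜 ℬ) (i : ℕ) : Prop :=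
  ∀ X : 𝒜, ∃ (M : 𝒜) (u : X ⟶ M), Mono u ∧ (T.F i).map u = 0

section Auxiliary

/-- An additive functor kills a `biprod.lift` whose components it kills. -/
lemma additive_map_biprod_lift_zero (F : 𝒜 ⥤ ℬ) [F.Additive] {A M N : 𝒜}
    (a : A ⟶ M) (b : A ⟶ N) (ha : F.map a = 0) (hb : F.map b = 0) :
    F.map (biprod.lift a b) = 0 := by
  have h : biprod.lift a b = a ≫ biprod.inl + b ≫ biprod.inr := by
    apply biprod.hom_ext <;> simp
  rw [h, F.map_add, F.map_comp, F.map_comp, ha, hb, zero_comp, zero_comp, add_zero]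

/-- The canonical short exact sequence associated to a monomorphism. -/
noncomputable abbrev effSeq {A M : 𝒜} (u : A ⟶ M) : ShortComplex 𝒜 :=
  ShortComplex.mk u (cokernel.π u) (cokernel.condition u)

lemma effSeq_shortExact {A M : 𝒜} (u : A ⟶ M) [Mono u] :
    (effSeq u).ShortExact :=
  ⟨ShortComplex.exact_of_g_is_cokernel _ (cokernelIsCokernel u)⟩

namespace DeltaFunctor

variable (T U : DeltaFunctor 𝒜 ℬ)

lemma epi_delta (i : ℕ) (S : ShortComplex 𝒜) (hS : S.ShortExact)
    (h0 : (T.F (i + 1)).map S.f = 0) : Epi (T.δ i S hS) :=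
  (T.exact₃ i S hS).epi_f h0

/-- The candidate component of `η (i+1)` at `S.X₁`, for a short exact sequence `S`
effacing in degree `i+1`. -/
noncomputable def cand (i : ℕ) (η : T.F i ⟶ U.F i) (S : ShortComplex 𝒜)
    (hS : S.ShortExact) (h0 : (T.F (i + 1)).map S.f = 0) :
    (T.F (i + 1)).obj S.X₁ ⟶ (U.F (i + 1)).obj S.X₁ :=
  letI : Epi (T.δ i S hS) := T.epi_delta i S hS h0
  (T.exact₂ i S hS).desc (η.app S.X₃ ≫ U.δ i S hS)
    (by rw [← Category.assoc, η.naturality, Category.assoc, U.comp_zero₂, comp_zero])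

lemma cand_fac (i : ℕ) (η : T.F i ⟶ U.F i) (S : ShortComplex 𝒜)
    (hS : S.ShortExact) (h0 : (T.F (i + 1)).map S.f = 0) :
    T.δ i S hS ≫ T.cand U i η S hS h0 = η.app S.X₃ ≫ U.δ i S hS := by
  letI : Epi (T.δ i S hS) := T.epi_delta i S hS h0
  exact (T.exact₂ i S hS).g_desc _ _

lemma candA (i : ℕ) (η : T.F i ⟶ U.F i) {S S' : ShortComplex 𝒜}
    (hS : S.ShortExact) (hS' : S'.ShortExact)
    (h0 : (T.F (i + 1)).map S'.f = 0) (φ : S ⟶ S') :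
    T.δ i S hS ≫ (T.F (i + 1)).map φ.τ₁ ≫ T.cand U i η S' hS' h0
      = η.app S.X₃ ≫ U.δ i S hS ≫ (U.F (i + 1)).map φ.τ₁ := by
  rw [← Category.assoc, ← T.naturality i S S' hS hS' φ, Category.assoc,
    T.cand_fac U i η S' hS' h0, ← Category.assoc, η.naturality, Category.assoc,
    U.naturality i S S' hS hS' φ]

/-- The candidate component attached to an effacing monomorphism. -/
noncomputable def cande (i : ℕ) (η : T.F i ⟶ U.F i) {A M : 𝒜} (u : A ⟶ M) [Mono u]
    (h0 : (T.F (i + 1)).map u = 0) :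
    (T.F (i + 1)).obj A ⟶ (U.F (i + 1)).obj A :=
  T.cand U i η (effSeq u) (effSeq_shortExact u) h0

lemma cande_fac (i : ℕ) (η : T.F i ⟶ U.F i) {A M : 𝒜} (u : A ⟶ M) [Mono u]
    (h0 : (T.F (i + 1)).map u = 0) :
    T.δ i (effSeq u) (effSeq_shortExact u) ≫ T.cande U i η u h0
      = η.app (cokernel u) ≫ U.δ i (effSeq u) (effSeq_shortExact u) :=
  T.cand_fac U i η _ _ _

lemma cande_eq_of_hom (i : ℕ) (η : T.F i ⟶ U.F i) {A M N : 𝒜}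
    (w : A ⟶ N) (u : A ⟶ M) [Mono w] [Mono u]
    (h0w : (T.F (i + 1)).map w = 0) (h0u : (T.F (i + 1)).map u = 0)
    (ψ : N ⟶ M) (hψ : w ≫ ψ = u) :
    T.cande U i η w h0w = T.cande U i η u h0u := by
  have hepi : Epi (T.δ i (effSeq w) (effSeq_shortExact w)) :=
    T.epi_delta i _ _ h0w
  let φ : effSeq w ⟶ effSeq u :=
    { τ₁ := 𝟙 A
      τ₂ := ψ
      τ₃ := cokernel.map w u (𝟙 A) ψ (by simp [hψ])
      comm₁₂ := by simp [hψ]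
      comm₂₃ := by simp }
  have h := T.candA U i η (effSeq_shortExact w) (effSeq_shortExact u) h0u φ
  simp only [φ, CategoryTheory.Functor.map_id, Category.id_comp, Category.comp_id] at h
  rw [← cancel_epi (T.δ i (effSeq w) (effSeq_shortExact w))]
  calc T.δ i (effSeq w) (effSeq_shortExact w) ≫ T.cande U i η w h0w
      = η.app (cokernel w) ≫ U.δ i (effSeq w) (effSeq_shortExact w) :=
        T.cande_fac U i η w h0w
    _ = T.δ i (effSeq w) (effSeq_shortExact w) ≫ T.cande U i η u h0u := h.symm

lemma cande_indep (i : ℕ) (η : T.F i ⟶ U.F i) {A M M' : 𝒜}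
    (u : A ⟶ M) (u' : A ⟶ M') [Mono u] [Mono u']
    (h0 : (T.F (i + 1)).map u = 0) (h0' : (T.F (i + 1)).map u' = 0) :
    T.cande U i η u h0 = T.cande U i η u' h0' := by
  letI : (T.F (i + 1)).Additive := T.additive (i + 1)
  have h0w : (T.F (i + 1)).map (biprod.lift u u') = 0 :=
    additive_map_biprod_lift_zero _ _ _ h0 h0'
  rw [← T.cande_eq_of_hom U i η (biprod.lift u u') u h0w h0 biprod.fst (by simp),
    T.cande_eq_of_hom U i η (biprod.lift u u') u' h0w h0' biprod.snd (by simp)]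

lemma cande_natural (i : ℕ) (η : T.F i ⟶ U.F i) {A B M N : 𝒜} (f : A ⟶ B)
    (u : A ⟶ M) (v : B ⟶ N) [Mono u] [Mono v]
    (h0u : (T.F (i + 1)).map u = 0) (h0v : (T.F (i + 1)).map v = 0) :
    T.cande U i η u h0u ≫ (U.F (i + 1)).map f
      = (T.F (i + 1)).map f ≫ T.cande U i η v h0v := by
  letI : (T.F (i + 1)).Additive := T.additive (i + 1)
  have h0w : (T.F (i + 1)).map (biprod.lift u (f ≫ v)) = 0 :=
    additive_map_biprod_lift_zero _ _ _ h0u (by rw [Functor.map_comp, h0v, comp_zero])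
  have hepi : Epi (T.δ i (effSeq (biprod.lift u (f ≫ v)))
      (effSeq_shortExact (biprod.lift u (f ≫ v)))) := T.epi_delta i _ _ h0w
  let φ : effSeq (biprod.lift u (f ≫ v)) ⟶ effSeq v :=
    { τ₁ := f
      τ₂ := biprod.snd
      τ₃ := cokernel.map (biprod.lift u (f ≫ v)) v f biprod.snd (by simp)
      comm₁₂ := by simp
      comm₂₃ := by simp }
  have h := T.candA U i η (effSeq_shortExact (biprod.lift u (f ≫ v)))
    (effSeq_shortExact v) h0v φ
  have h' := T.cande_fac U i η (biprod.lift u (f ≫ v)) h0w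
  rw [← T.cande_eq_of_hom U i η (biprod.lift u (f ≫ v)) u h0w h0u biprod.fst (by simp)]
  rw [← cancel_epi (T.δ i (effSeq (biprod.lift u (f ≫ v)))
    (effSeq_shortExact (biprod.lift u (f ≫ v)))), ← Category.assoc, h', Category.assoc]
  exact h.symm

lemma cande_compat (i : ℕ) (η : T.F i ⟶ U.F i) (S : ShortComplex 𝒜)
    (hS : S.ShortExact) {M : 𝒜} (u : S.X₁ ⟶ M) [Mono u]
    (h0u : (T.F (i + 1)).map u = 0) :
    η.app S.X₃ ≫ U.δ i S hS = T.δ i S hS ≫ T.cande U i η u h0u := by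
  letI : Mono S.f := hS.mono_f
  letI : Epi S.g := hS.epi_g
  haveI : Mono (u ≫ pushout.inr S.f u) := mono_comp _ _
  have h0w : (T.F (i + 1)).map (u ≫ pushout.inr S.f u) = 0 := by
    rw [Functor.map_comp, h0u, zero_comp]
  have hcond : S.f ≫ pushout.inl S.f u ≫ cokernel.π (u ≫ pushout.inr S.f u) = 0 := by
    rw [← Category.assoc, pushout.condition, cokernel.condition]
  let φ : S ⟶ effSeq (u ≫ pushout.inr S.f u) :=
    { τ₁ := 𝟙 S.X₁
      τ₂ := pushout.inl S.f u
      τ₃ := hS.exact.desc (pushout.inl S.f u ≫ cokernel.π (u ≫ pushout.inr S.f u)) hcond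
      comm₁₂ := by rw [Category.id_comp]; exact pushout.condition.symm
      comm₂₃ := (hS.exact.g_desc _ _).symm }
  have h := T.candA U i η hS (effSeq_shortExact (u ≫ pushout.inr S.f u)) h0w φ
  simp only [φ, CategoryTheory.Functor.map_id, Category.id_comp, Category.comp_id] at h
  calc η.app S.X₃ ≫ U.δ i S hS
      = T.δ i S hS ≫ T.cande U i η (u ≫ pushout.inr S.f u) h0w := h.symm
    _ = T.δ i S hS ≫ T.cande U i η u h0u := by
        rw [T.cande_indep U i η (u ≫ pushout.inr S.f u) u h0w h0u]

end DeltaFunctor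

end Auxiliary

/-- a δ-functor whose components in positive degrees are effaceable is
universal. -/
theorem deltaFunctor_universal_of_effaceable (T : DeltaFunctor 𝒜 ℬ)
    (heff : ∀ i : ℕ, 0 < i → T.Effaceable i) : T.IsUniversal := by
  intro U θ
  choose M u hmono h0 using fun (i : ℕ) (A : 𝒜) => heff (i + 1) i.succ_pos A
  haveI : ∀ i A, Mono (u i A) := hmono
  let next : ∀ i : ℕ, (T.F i ⟶ U.F i) → (T.F (i + 1) ⟶ U.F (i + 1)) := fun i ηi =>
    { app := fun A => T.cande U i ηi (u i A) (h0 i A)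
      naturality := fun A B f =>
        (T.cande_natural U i ηi f (u i A) (u i B) (h0 i A) (h0 i B)).symm }
  let η : ∀ i, T.F i ⟶ U.F i := fun i => Nat.rec θ next i
  have hsucc : ∀ i, η (i + 1) = next i (η i) := fun i => rfl
  refine ⟨η, ⟨rfl, ?_⟩, ?_⟩
  · intro i S hS
    exact T.cande_compat U i (η i) S hS (u i S.X₁) (h0 i S.X₁)
  · rintro η' ⟨h0', hcompat⟩
    funext i
    induction i with
    | zero => exact h0'
    | succ i ih =>
      ext A
      have hepi : Epi (T.δ i (effSeq (u i A)) (effSeq_shortExact (u i A))) :=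
        T.epi_delta i _ _ (h0 i A)
      rw [← cancel_epi (T.δ i (effSeq (u i A)) (effSeq_shortExact (u i A)))]
      have h1 := hcompat i (effSeq (u i A)) (effSeq_shortExact (u i A))
      have h2 := T.cande_compat U i (η i) (effSeq (u i A)) (effSeq_shortExact (u i A))
        (u i A) (h0 i A)
      have h3 : T.cande U i (η i) (u i A) (h0 i A) = (η (i + 1)).app A := rfl
      rw [← h1, ih, h2, h3]
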